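/- arXiv:2312.10699 — 3 statements merged into one kernel-verified Lean document; each statement's English description precedes it below -/
import Mathlib

section
/- Let N be a normal subgroup of a finite group G. Then [N,G] equals the intersection of the kernels of all linear G-invariant irreducible characters of N. -/
/-!
A linear character of `N` is a homomorphism `χ : N →* ℂˣ`: on a one-dimensional space the trace
is multiplicative, and conversely a one-dimensional representation is irreducible. As
`(g n g⁻¹)⁻¹ n = ⁅g, n⁻¹⁆`, such a `χ` is `G`-invariant exactly when it kills `[N, G]`. So the
linear `G`-invariant characters of `N` are the characters of the finite abelian group
`N ⧸ [N, G]`, and these separate its points.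
-/

open scoped Classical
set_option linter.unusedSectionVars false

noncomputable section

namespace CT

variable {G : Type} [Group G] [Fintype G]

/-- `χ` is the character of an irreducible (simple) finite-dimensional complex
representation of `G`. -/
def IsIrrChar (G : Type) [Group G] (χ : G → ℂ) : Prop :=
  ∃ V : FDRep ℂ G, CategoryTheory.Simple V ∧ χ = V.character

/-- The conjugate character `θ^g`, given by `θ^g (n) = θ (g n g⁻¹)`. -/
def conjChar (N : Subgroup G) [hN : N.Normal] (θ : ↥N → ℂ) (g : G) : ↥N → ℂ :=
  fun n => θ ⟨g * (n : G) * g⁻¹, hN.conj_mem _ n.2 g⟩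

lemma conjChar_one (N : Subgroup G) [N.Normal] (θ : ↥N → ℂ) :
    conjChar N θ 1 = θ := by
  funext n; simp [conjChar]

lemma conjChar_mul (N : Subgroup G) [N.Normal] (θ : ↥N → ℂ) (a b : G) :
    conjChar N θ (a * b) = conjChar N (conjChar N θ a) b := by
  funext n
  simp only [conjChar, Subtype.coe_mk]
  congr 1
  ext
  simp [mul_assoc]

/-- `θ` is a `G`-invariant character of `N`. -/
def IsInv (N : Subgroup G) [N.Normal] (θ : ↥N → ℂ) : Prop :=
  ∀ g : G, conjChar N θ g = θ

/-- The inertia subgroup `I_G(θ)` of a character `θ` of `N` in `G`. -/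
def inertia (N : Subgroup G) [N.Normal] (θ : ↥N → ℂ) : Subgroup G where
  carrier := {g : G | conjChar N θ g = θ}
  one_mem' := conjChar_one N θ
  mul_mem' := by
    intro a b ha hb
    show conjChar N θ (a * b) = θ
    rw [conjChar_mul, ha, hb]
  inv_mem' := by
    intro a ha
    show conjChar N θ a⁻¹ = θ
    have h := conjChar_mul N θ a a⁻¹
    rw [mul_inv_cancel, conjChar_one, ha] at h
    exact h.symm

/-- The minimal `G`-invariant character `θ̂` of `N` over `θ`: the sum of the
distinct `G`-conjugates of `θ`. -/
def hat (N : Subgroup G) [N.Normal] (θ : ↥N → ℂ) : ↥N → ℂ :=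
  fun n => ∑ f ∈ Finset.univ.image (fun g : G => conjChar N θ g), f n

/-- The usual inner product of class functions. -/
def inner' (α : Type*) [Fintype α] (f h : α → ℂ) : ℂ :=
  (Fintype.card α : ℂ)⁻¹ * ∑ x, f x * (starRingEnd ℂ) (h x)

/-- `χ ∈ Irr(G | θ)` : the restriction of `χ` to `N` has `θ` as a constituent. -/
def Over (N : Subgroup G) (χ : G → ℂ) (θ : ↥N → ℂ) : Prop :=
  inner' ↥N (fun n => χ ↑n) θ ≠ 0

/-- The character of `N` induced from a character `lam` of `H ≤ N`. -/
def ind (H N : Subgroup G) (lam : ↥H → ℂ) : ↥N → ℂ :=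
  fun n => (Fintype.card ↥H : ℂ)⁻¹ *
    ∑ x : ↥N, if h : (x : G) * (n : G) * (x : G)⁻¹ ∈ H then lam ⟨_, h⟩ else 0

/-- The character of `G` induced from a character `lam` of `H`. -/
def indG (H : Subgroup G) (lam : ↥H → ℂ) : G → ℂ :=
  fun g => (Fintype.card ↥H : ℂ)⁻¹ *
    ∑ x : G, if h : x * g * x⁻¹ ∈ H then lam ⟨_, h⟩ else 0

/-- The lower central `G`-series of `N` : `gammaG N k = Γ^{k+1}_G(N)`, so
`gammaG N 0 = N` and `gammaG N (k+1) = [gammaG N k, G]`. -/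
def gammaG (N : Subgroup G) : ℕ → Subgroup G
  | 0 => N
  | (k + 1) => ⁅gammaG N k, (⊤ : Subgroup G)⁆

/-- The upper central `G`-series of `N` (as subsets of `G`):
`zUpper N 0 = 1` and `zUpper N (k+1)` is the preimage in `N` of
`Z(G/Z^k) ∩ N/Z^k`, i.e. the set of `x ∈ N` all of whose commutators with
elements of `G` lie in `zUpper N k`. -/
def zUpper (N : Subgroup G) : ℕ → Set G
  | 0 => {1}
  | (k + 1) => {x : G | x ∈ N ∧ ∀ y : G, x * y * x⁻¹ * y⁻¹ ∈ zUpper N k}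

end CT

universe u

open Module CategoryTheory

theorem LinearMap.trace_mul_of_finrank_eq_one {R M : Type*} [CommRing R] [Nontrivial R]
    [AddCommGroup M] [Module R M] [Module.Free R M] [Module.Finite R M]
    (hM : finrank R M = 1) (f g : Module.End R M) :
    trace R M (f * g) = trace R M f * trace R M g := by
  obtain ⟨a, rfl, -⟩ := f.existsUnique_eq_smul_id_of_finrank_eq_one hM
  obtain ⟨b, rfl, -⟩ := g.existsUnique_eq_smul_id_of_finrank_eq_one hM
  simp [hM, smul_smul, mul_comm, Module.End.mul_eq_comp]

theorem FDRep.char_mul_of_finrank_eq_one {k H : Type*} [Field k] [Group H] (V : FDRep k H)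
    (hV : finrank k V = 1) (a b : H) :
    V.character (a * b) = V.character a * V.character b := by
  simp only [FDRep.character, map_mul]
  exact LinearMap.trace_mul_of_finrank_eq_one hV _ _

def Representation.ofHomUnits {k H : Type*} [Field k] [Monoid H] (χ : H →* kˣ) :
    Representation k H k :=
  (DistribMulAction.toModuleEnd k k).comp χ

theorem FDRep.char_of_ofHomUnits {k H : Type*} [Field k] [Group H] (χ : H →* kˣ) (h : H) :
    (FDRep.of (Representation.ofHomUnits χ)).character h = χ h := by
  rw [FDRep.character, show FDRep.ρ _ h = (χ h : k) • LinearMap.id from rfl]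
  simp

theorem FDRep.simple_of_ofHomUnits {k H : Type u} [Field k] [IsAlgClosed k] [CharZero k]
    [Group H] [Fintype H] (χ : H →* kˣ) : Simple (FDRep.of (Representation.ofHomUnits χ)) := by
  rw [FDRep.simple_iff_char_is_norm_one]
  simp [FDRep.char_of_ofHomUnits]

theorem exists_homUnits_ne_one_of_commutator_le {H k : Type*} [Group H] [Finite H] [Field k]
    [IsAlgClosed k] [CharZero k] {K : Subgroup H} (hK : commutator H ≤ K) {x : H}
    (hx : x ∉ K) : ∃ χ : H →* kˣ, K ≤ χ.ker ∧ χ x ≠ 1 := by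
  have := Subgroup.Normal.of_commutator_le _ hK
  have := Subgroup.Normal.quotient_commutative_iff_commutator_le.mpr hK
  open scoped IsMulCommutative in
  obtain ⟨φ, hφ⟩ := CommGroup.exists_apply_ne_one_of_hasEnoughRootsOfUnity (H ⧸ K) k
    (a := (x : H ⧸ K)) (by rwa [Ne, QuotientGroup.eq_one_iff])
  refine ⟨φ.comp (QuotientGroup.mk' K), fun y hy => ?_, hφ⟩
  simp [(QuotientGroup.eq_one_iff y).mpr hy]

theorem Subgroup.commutator_le_subgroupOf_commutator {G : Type*} [Group G]
    {N H : Subgroup G} (hNH : N ≤ H) : _root_.commutator N ≤ ⁅N, H⁆.subgroupOf N := by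
  rw [Subgroup.subgroupOf, ← Subgroup.map_le_iff_le_comap, Subgroup.map_subtype_commutator]
  exact Subgroup.commutator_mono le_rfl hNH

namespace CT

theorem isIrrChar_and_map_one_iff {H : Type} [Group H] [Fintype H] (θ : H → ℂ) :
    IsIrrChar H θ ∧ θ 1 = 1 ↔ ∃ χ : H →* ℂˣ, θ = fun h => (χ h : ℂ) := by
  constructor
  · rintro ⟨⟨V, -, rfl⟩, h1⟩
    have hV : finrank ℂ V = 1 := by exact_mod_cast (FDRep.char_one V).symm.trans h1
    let χ : H →* ℂ := ⟨⟨V.character, h1⟩, FDRep.char_mul_of_finrank_eq_one V hV⟩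
    exact ⟨χ.toHomUnits, rfl⟩
  · rintro ⟨χ, rfl⟩
    refine ⟨⟨_, FDRep.simple_of_ofHomUnits χ, ?_⟩, by simp⟩
    funext h
    exact (FDRep.char_of_ofHomUnits χ h).symm

open scoped commutatorElement in
theorem isInv_iff_commutator_le_ker {G : Type} [Group G] (N : Subgroup G) [hN : N.Normal]
    (χ : N →* ℂˣ) :
    IsInv N (fun n => (χ n : ℂ)) ↔ (⁅N, ⊤⁆ : Subgroup G).subgroupOf N ≤ χ.ker := by
  have conj_eq_iff (g : G) (n : N) : conjChar N (fun n => (χ n : ℂ)) g n = χ n ↔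
      (⟨g * n * g⁻¹, hN.conj_mem n n.2 g⟩ : N)⁻¹ * n ∈ χ.ker := by
    rw [← MonoidHom.eq_iff, conjChar, Units.val_inj, eq_comm]
  have coe_eq (g : G) (n : N) :
      (((⟨g * n * g⁻¹, hN.conj_mem n n.2 g⟩ : N)⁻¹ * n : N) : G) = ⁅g, (n : G)⁻¹⁆ := by
    simp [commutatorElement_def, mul_assoc]
  constructor
  · intro hinv
    rw [← Subgroup.comap_map_eq_self_of_injective N.subtype_injective χ.ker]
    apply Subgroup.comap_mono
    rw [Subgroup.commutator_comm, Subgroup.commutator_le]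
    rintro g - n hn
    exact ⟨_, (conj_eq_iff g ⟨n, hn⟩⁻¹).mp (congrFun (hinv g) _),
      (coe_eq g _).trans (by simp)⟩
  · intro hK g
    funext n
    refine (conj_eq_iff g n).mpr (hK ?_)
    rw [Subgroup.mem_subgroupOf, coe_eq, Subgroup.commutator_comm]
    exact Subgroup.commutator_mem_commutator (Subgroup.mem_top g) (inv_mem n.2)

/-- [N,G] equals the intersection of the kernels of all linear
G-invariant irreducible characters of N. -/
theorem commutator_eq_iInter_ker
    {G : Type} [Group G] [Fintype G] (N : Subgroup G) [N.Normal] :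
    ((⁅N, (⊤ : Subgroup G)⁆ : Subgroup G) : Set G) =
      ⋂ θ ∈ {θ : ↥N → ℂ | IsIrrChar ↥N θ ∧ θ 1 = 1 ∧ IsInv N θ},
        {g : G | ∃ h : g ∈ N, θ ⟨g, h⟩ = θ 1} := by
  ext x
  simp only [Set.mem_iInter, Set.mem_ofPred_eq, SetLike.mem_coe]
  constructor
  · rintro hx θ ⟨hθ, hθ1, hθN⟩
    obtain ⟨χ, rfl⟩ := (isIrrChar_and_map_one_iff θ).mp ⟨hθ, hθ1⟩
    have hxN : x ∈ N := Subgroup.commutator_le_left N ⊤ hx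
    have hxχ : χ ⟨x, hxN⟩ = 1 :=
      (isInv_iff_commutator_le_ker N χ).mp hθN (Subgroup.mem_subgroupOf.mpr hx)
    exact ⟨hxN, by simp [hxχ]⟩
  · intro hx
    have mem_ker (χ : N →* ℂˣ) (hχ : (⁅N, ⊤⁆ : Subgroup G).subgroupOf N ≤ χ.ker) :
        ∃ h : x ∈ N, χ ⟨x, h⟩ = 1 := by
      obtain ⟨h, e⟩ := hx _ ⟨((isIrrChar_and_map_one_iff _).mpr ⟨χ, rfl⟩).1, by simp,
        (isInv_iff_commutator_le_ker N χ).mpr hχ⟩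
      exact ⟨h, Units.ext (by simpa using e)⟩
    obtain ⟨hxN, -⟩ := mem_ker 1 (by simp)
    by_contra hxK
    obtain ⟨χ, hKχ, hχx⟩ := exists_homUnits_ne_one_of_commutator_le (k := ℂ)
      (Subgroup.commutator_le_subgroupOf_commutator le_top)
      (x := ⟨x, hxN⟩) (by rwa [Subgroup.mem_subgroupOf])
    exact hχx (mem_ker χ hKχ).2

end CT
end
end

section
/- Let N be a normal subgroup of a finite group G that is hypercentral in G, i.e., Γ^r_G(N) = 1 for some r, where Γ¹_G(N) = N and Γ^{i+1}_G(N) = [Γ^i_G(N), G]. Then [G,N] is contained in Φ(G) ∩ N, where Φ(G) is the Frattini subgroup of G. -/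
open scoped Classical
set_option linter.unusedSectionVars false

noncomputable section

/-!
Let `M` be a maximal subgroup of `G`. If `G' ≤ M` then `[G, N] ≤ M`. Otherwise `M` contains every
subgroup `Γ` with `[Γ, G] ≤ M`: if not, `G = M ⊔ Γ` with `Γ` central modulo `M`, making `M`
normal with `G ⧸ M` abelian. Descending from `Γ^r_G(N) = 1 ≤ M` this gives `N ≤ M`, whence
`[G, N] ≤ N ≤ M`.
-/

namespace Subgroup

variable {G : Type*} [Group G]

/-- `Γ` normalizes `M`, so `M` is normal, and `G ⧸ M` is abelian as the image of `Γ`. -/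
theorem commutator_top_le_of_sup_eq_top {M Γ : Subgroup G} (hsup : M ⊔ Γ = ⊤)
    (hc : ⁅Γ, ⊤⁆ ≤ M) : ⁅(⊤ : Subgroup G), ⊤⁆ ≤ M := by
  have hΓ : Γ ≤ normalizer (M : Set G) := le_normalizer_iff_commutator_le_left.mpr <|
    (commutator_comm M Γ).trans_le ((commutator_mono le_rfl le_top).trans hc)
  have : M.Normal := normalizer_eq_top_iff.mp <| top_le_iff.mp <|
    hsup ▸ sup_le le_normalizer hΓ
  have hmap : (⊤ : Subgroup G).map (QuotientGroup.mk' M) = Γ.map (QuotientGroup.mk' M) := by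
    rw [← hsup, map_sup, (map_eq_bot_iff _).mpr (QuotientGroup.ker_mk' M).ge, bot_sup_eq]
  rw [← QuotientGroup.ker_mk' M, ← map_eq_bot_iff, map_commutator, hmap, ← map_commutator,
    map_eq_bot_iff, QuotientGroup.ker_mk']
  exact (commutator_mono le_rfl le_top).trans hc

theorem le_of_isCoatom_of_commutator_le {M Γ : Subgroup G} (hM : IsCoatom M)
    (hG : ¬ ⁅(⊤ : Subgroup G), ⊤⁆ ≤ M) (hc : ⁅Γ, ⊤⁆ ≤ M) : Γ ≤ M := by
  by_contra hΓ
  exact hG (commutator_top_le_of_sup_eq_top (codisjoint_iff.mp (hM.not_le_iff_codisjoint.mp hΓ)) hc)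

end Subgroup

namespace CT

theorem le_of_isCoatom_of_gammaG_eq_bot {G : Type} [Group G] [Fintype G] {N M : Subgroup G}
    (hM : IsCoatom M) (hG : ¬ ⁅(⊤ : Subgroup G), ⊤⁆ ≤ M) {r : ℕ} (hr : gammaG N r = ⊥) :
    N ≤ M :=
  Nat.decreasingInduction (motive := fun k _ => gammaG N k ≤ M)
    (fun _ _ ih => Subgroup.le_of_isCoatom_of_commutator_le hM hG ih) (hr ▸ bot_le) r.zero_le

/-- if N is hypercentral in G then [G,N] ≤ Φ(G) ∩ N. -/
theorem commutator_le_frattini_of_hypercentral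
    {G : Type} [Group G] [Fintype G] (N : Subgroup G) [N.Normal]
    (h : ∃ r : ℕ, gammaG N r = ⊥) :
    ⁅(⊤ : Subgroup G), N⁆ ≤ frattini G ⊓ N := by
  obtain ⟨r, hr⟩ := h
  refine le_inf ?_ (Subgroup.commutator_le_right _ _)
  rw [frattini, Order.radical]
  refine le_iInf₂ fun M hM => ?_
  by_cases hG : ⁅(⊤ : Subgroup G), ⊤⁆ ≤ M
  · exact (Subgroup.commutator_mono le_rfl le_top).trans hG
  · exact (Subgroup.commutator_le_right _ _).trans (le_of_isCoatom_of_gammaG_eq_bot hM hG hr)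

end CT
end
end

section
/- Let G be a finite group, M a maximal subgroup of G, and N ⊴ G. If [G,[G,N]] ≤ M, then [G,N] ≤ M. -/
open scoped Classical
set_option linter.unusedSectionVars false

noncomputable section

namespace CT
open scoped commutatorElement
/-- if M is a maximal subgroup of G, N ⊴ G and [G,[G,N]] ≤ M, then
[G,N] ≤ M. -/
theorem commutator_le_maximal
    {G : Type} [Group G] [Fintype G] (M : Subgroup G) (hM : IsCoatom M)
    (N : Subgroup G) [N.Normal]
    (h : ⁅(⊤ : Subgroup G), ⁅(⊤ : Subgroup G), N⁆⁆ ≤ M) :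
    ⁅(⊤ : Subgroup G), N⁆ ≤ M := by
  set K := ⁅(⊤ : Subgroup G), N⁆ with hKdef
  by_contra hKM
  have hKnormal : K.Normal := Subgroup.commutator_normal ⊤ N
  have hKN : K ≤ N := Subgroup.commutator_le_right ⊤ N
  have hsup : K ⊔ M = ⊤ := by
    refine hM.2 (K ⊔ M) (lt_of_le_of_ne le_sup_right ?_)
    intro hEq
    exact hKM (hEq ▸ le_sup_left)
  have hGK : ∀ g : G, ∀ k ∈ K, ⁅g, k⁆ ∈ M := fun g k hk =>
    h (Subgroup.commutator_mem_commutator (Subgroup.mem_top g) hk)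
  -- conjugation by elements of K preserves M ⊓ N
  have hKc : ∀ k ∈ K, ∀ x ∈ M ⊓ N, k * x * k⁻¹ ∈ M ⊓ N := by
    intro k hk x hx
    have hcM : ⁅k, x⁆ ∈ M := by
      have : ⁅k, x⁆ ∈ ⁅(⊤ : Subgroup G), K⁆ := by
        have := Subgroup.commutator_mem_commutator hk (Subgroup.mem_top x)
        rwa [Subgroup.commutator_comm] at this
      exact h this
    have hcN : ⁅k, x⁆ ∈ N := N.mul_mem (N.mul_mem (N.mul_mem (hKN hk) hx.2) (N.inv_mem (hKN hk))) (N.inv_mem hx.2)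
    have : k * x * k⁻¹ = ⁅k, x⁆ * x := by group
    rw [this]
    exact ⟨M.mul_mem hcM hx.1, N.mul_mem hcN hx.2⟩
  have hMc : ∀ m ∈ M, ∀ x ∈ M ⊓ N, m * x * m⁻¹ ∈ M ⊓ N := by
    intro m hm x hx
    exact ⟨M.mul_mem (M.mul_mem hm hx.1) (M.inv_mem hm),
      Subgroup.Normal.conj_mem ‹N.Normal› x hx.2 m⟩
  -- M ⊓ N is normal in G
  have hnorm : ∀ g : G, ∀ x ∈ M ⊓ N, g * x * g⁻¹ ∈ M ⊓ N := by
    have hle : (⊤ : Subgroup G) ≤ Subgroup.normalizer ((M ⊓ N : Subgroup G) : Set G) := by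
      rw [← hsup]
      refine sup_le ?_ ?_
      · intro k hk
        rw [Subgroup.mem_normalizer_iff]
        intro x
        constructor
        · intro hx; exact hKc k hk x hx
        · intro hx
          have := hKc k⁻¹ (K.inv_mem hk) _ hx
          simpa [mul_assoc] using this
      · intro m hm
        rw [Subgroup.mem_normalizer_iff]
        intro x
        constructor
        · intro hx; exact hMc m hm x hx
        · intro hx
          have := hMc m⁻¹ (M.inv_mem hm) _ hx
          simpa [mul_assoc] using this
    intro g x hx
    exact (Subgroup.mem_normalizer_iff.mp (hle (Subgroup.mem_top g)) x).mp hx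
  -- decomposition N ≤ K * (M ⊓ N)
  have hdec : ∀ n ∈ N, ∃ k ∈ K, ∃ x ∈ M ⊓ N, n = k * x := by
    intro n hn
    have : n ∈ ((K ⊔ M : Subgroup G) : Set G) := by rw [hsup]; trivial
    rw [Subgroup.normal_mul] at this
    obtain ⟨k, hk, m, hm, hkm⟩ := this
    refine ⟨k, hk, m, ⟨hm, ?_⟩, hkm.symm⟩
    have : m = k⁻¹ * n := by rw [← hkm]; group
    rw [this]
    exact N.mul_mem (N.inv_mem (hKN hk)) hn
  -- final contradiction: K ≤ M
  apply hKM
  rw [hKdef, Subgroup.commutator_le]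
  intro g _ n hn
  obtain ⟨k, hk, x, hx, rfl⟩ := hdec n hn
  have h1 : ⁅g, k⁆ ∈ M := hGK g k hk
  have h2 : ⁅g, x⁆ ∈ M ⊓ N := by
    have hgx : g * x * g⁻¹ ∈ M ⊓ N := hnorm g x hx
    have : ⁅g, x⁆ = (g * x * g⁻¹) * x⁻¹ := by group
    rw [this]
    exact (M ⊓ N).mul_mem hgx ((M ⊓ N).inv_mem hx)
  have h3 : k * ⁅g, x⁆ * k⁻¹ ∈ M ⊓ N := hKc k hk _ h2
  have : ⁅g, k * x⁆ = ⁅g, k⁆ * (k * ⁅g, x⁆ * k⁻¹) := by group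
  rw [this]
  exact M.mul_mem h1 h3.1

end CT
end
end
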